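/- arXiv:1504.02444 — 3 statements merged into one kernel-verified Lean document; each statement's English description precedes it below -/
import Mathlib

section
/- For a complete observable FSM S with states s1 and s2, the pair (s1, s2) is not adaptively homing if and only if the intersection FSM S/s1 ∩ S/s2 contains a complete submachine (a nonempty subset of states, containing the initial state, closed in the sense that from every state in the subset every input has at least one transition leading back into the subset). -/
/-- A (non-initialized) finite state machine with transition relation `h ⊆ S × I × O × S`. -/
structure FSM (S I O : Type) where
  h : S → I → O → S → Prop

namespace FSM

variable {S I O Q : Type}

/-- `M` is complete: every input is defined at every state. -/
def Complete (M : FSM S I O) : Prop := ∀ s i, ∃ o s', M.h s i o s'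

/-- `M` is observable: the `io`-successor of a state is unique when it exists. -/
def Observable (M : FSM S I O) : Prop :=
  ∀ s i o t₁ t₂, M.h s i o t₁ → M.h s i o t₂ → t₁ = t₂

/-- `M.Runs s γ t` : `t` is reached from `s` along the trace `γ` (a list of input/output pairs). -/
inductive Runs (M : FSM S I O) : S → List (I × O) → S → Prop
  | nil (s : S) : Runs M s [] s
  | cons {s : S} {i : I} {o : O} {s' : S} {γ : List (I × O)} {t : S} :
      M.h s i o s' → Runs M s' γ t → Runs M s ((i, o) :: γ) t

/-- A deadlock state has no outgoing transitions. -/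
def Deadlock (M : FSM S I O) (q : S) : Prop := ∀ i o q', ¬ M.h q i o q'

/-- A test case: initially connected, single-input, output-complete, observable,
acyclic initialized FSM. -/
structure IsTestCase (P : FSM Q I O) (q0 : Q) : Prop where
  singleInput : ∀ q i₁ o₁ q₁ i₂ o₂ q₂, P.h q i₁ o₁ q₁ → P.h q i₂ o₂ q₂ → i₁ = i₂
  outputComplete : ∀ q i o q', P.h q i o q' → ∀ o', ∃ q'', P.h q i o' q''
  observable : P.Observable
  acyclic : ∀ q γ, γ ≠ ([] : List (I × O)) → ¬ P.Runs q γ q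
  connected : ∀ q, ∃ γ, P.Runs q0 γ q

/-- `P` (with initial state `q0`) is a homing test case for the set `S'` of states of `M`:
for every trace from `q0` to a deadlock state, the successors of all states of `S'`,
where they exist, coincide in a single state. -/
def IsHomingFor (M : FSM S I O) (S' : Set S) (P : FSM Q I O) (q0 : Q) : Prop :=
  ∀ γ q, P.Runs q0 γ q → P.Deadlock q →
    ∃ s : S, ∀ s' ∈ S', ∀ t, M.Runs s' γ t → t = s

/-- The set `S'` of states of `M` is adaptively homing: some (finite) homing test case exists. -/
def AdaptivelyHomingSet (M : FSM S I O) (S' : Set S) : Prop :=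
  ∃ (Q : Type) (_ : Fintype Q) (P : FSM Q I O) (q0 : Q),
    P.IsTestCase q0 ∧ IsHomingFor M S' P q0

/-- The pair `(s₁, s₂)` is adaptively homing. -/
def AdaptivelyHomingPair (M : FSM S I O) (s₁ s₂ : S) : Prop :=
  AdaptivelyHomingSet M {s₁, s₂}

/-- The intersection FSM `S/s₁ ∩ S/s₂`: states are pairs of states of `M`, and there is a
transition iff both components have the corresponding transition and the successors differ. -/
def inter (M : FSM S I O) : FSM (S × S) I O :=
  ⟨fun p i o p' => M.h p.1 i o p'.1 ∧ M.h p.2 i o p'.2 ∧ p'.1 ≠ p'.2⟩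

/-- A set `A` of states is input-closed in `M`: from every state of `A` every input has at
least one transition leading back into `A`. -/
def InputClosed (M : FSM S I O) (A : Set S) : Prop :=
  ∀ q ∈ A, ∀ i, ∃ o q', M.h q i o q' ∧ q' ∈ A

/-- The intersection `S/s₁ ∩ S/s₂` contains a complete submachine: a set of (distinct-component)
pairs containing the initial state `(s₁, s₂)` and input-closed in the intersection FSM. -/
def HasCompleteSubmachine (M : FSM S I O) (s₁ s₂ : S) : Prop :=
  ∃ A : Set (S × S), (s₁, s₂) ∈ A ∧ (∀ p ∈ A, p.1 ≠ p.2) ∧ InputClosed M.inter A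

/-- One round of the iterative deletion process: keep the states of `A` at which every input
has a transition into `A`. -/
def step (M : FSM S I O) (A : Set S) : Set S :=
  {q ∈ A | ∀ i, ∃ o q', M.h q i o q' ∧ q' ∈ A}

/-- Survivors of the deletion process after `n` rounds, starting from all states. -/
def surv (M : FSM S I O) : ℕ → Set S
  | 0 => Set.univ
  | n + 1 => step M (surv M n)

/-- Survivors of the deletion process on the intersection FSM after `n` rounds, starting
from all states of the intersection (pairs of distinct states). -/
def interSurv (M : FSM S I O) : ℕ → Set (S × S)
  | 0 => {p | p.1 ≠ p.2}
  | n + 1 => step M.inter (interSurv M n)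

/-- The greatest input-closed subset of states of the intersection FSM: the union of all
input-closed sets of distinct-component pairs. -/
def greatestInterClosed (M : FSM S I O) : Set (S × S) :=
  ⋃₀ {A : Set (S × S) | (∀ p ∈ A, p.1 ≠ p.2) ∧ InputClosed M.inter A}

end FSM

/-!
If `A` is a complete submachine of `S/s₁ ∩ S/s₂`, then against any test case the pair of
current states can be kept inside `A` whatever input the test case applies; following a
path of the (finite, acyclic) test case down to a deadlock thus leaves two distinct current
states, so the test case is not homing.

Conversely, delete from the distinct pairs, round after round, every pair having no input under
which some transition stays among the remaining pairs. On a finite state set this stabilises at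
an input-closed set, which by assumption misses `(s₁, s₂)`; so `(s₁, s₂)` is deleted in some
round. A pair deleted in round `n + 1` has an input all of whose successor pairs were deleted
by round `n`, and applying these inputs, with the deletion round as a decreasing rank, is an
acyclic adaptive strategy that runs until no distinct pair of current states is left.
-/

namespace FSM

variable {S T Q I O : Type}

section Runs

variable {M : FSM S I O}

theorem Runs.snoc {s t u : S} {γ : List (I × O)} {i : I} {o : O}
    (h : M.Runs s γ t) (ht : M.h t i o u) : M.Runs s (γ ++ [(i, o)]) u := by
  induction h with
  | nil => exact .cons ht (.nil u)
  | cons hs _ ih => exact .cons hs (ih ht)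

theorem Runs.of_deadlock {s t : S} {γ : List (I × O)} (hs : M.Deadlock s) (h : M.Runs s γ t) :
    γ = [] ∧ t = s := by
  cases h with
  | nil => exact ⟨rfl, rfl⟩
  | cons ht => exact absurd ht (hs _ _ _)

theorem Runs.inter {p p' : S × S} {γ : List (I × O)} (h : M.inter.Runs p γ p') :
    M.Runs p.1 γ p'.1 ∧ M.Runs p.2 γ p'.2 := by
  induction h with
  | nil => exact ⟨.nil _, .nil _⟩
  | cons hs _ ih => exact ⟨.cons hs.1 ih.1, .cons hs.2.1 ih.2⟩

theorem Observable.inter (ho : M.Observable) : M.inter.Observable :=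
  fun _ _ _ _ _ h₁ h₂ => Prod.ext (ho _ _ _ _ _ h₁.1 h₂.1) (ho _ _ _ _ _ h₁.2.1 h₂.2.1)

end Runs

section Acyclic

variable {P : FSM Q I O}

def Successor (P : FSM Q I O) (q' q : Q) : Prop := ∃ i o, P.h q i o q'

theorem exists_runs_of_transGen_successor {a b : Q} (h : Relation.TransGen P.Successor a b) :
    ∃ γ ≠ [], P.Runs b γ a := by
  induction h with
  | single h => obtain ⟨i, o, h⟩ := h; exact ⟨[(i, o)], by simp, .cons h (.nil _)⟩
  | tail _ h ih =>
    obtain ⟨i, o, h⟩ := h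
    obtain ⟨γ, -, hγ⟩ := ih
    exact ⟨(i, o) :: γ, by simp, .cons h hγ⟩

theorem wellFounded_successor_of_acyclic [Finite Q]
    (hP : ∀ q γ, γ ≠ ([] : List (I × O)) → ¬ P.Runs q γ q) : WellFounded P.Successor := by
  have : Std.Irrefl (Relation.TransGen P.Successor) :=
    ⟨fun q h => let ⟨γ, hγ, hr⟩ := exists_runs_of_transGen_successor h; hP q γ hγ hr⟩
  exact Subrelation.wf (fun h => .single h)
    (Finite.wellFounded_of_trans_of_irrefl (Relation.TransGen P.Successor))

theorem acyclic_of_rank (μ : Q → ℕ) (hμ : ∀ q i o q', P.h q i o q' → μ q' < μ q) :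
    ∀ q γ, γ ≠ ([] : List (I × O)) → ¬ P.Runs q γ q := by
  have decrease : ∀ {q γ q'}, P.Runs q γ q' → μ q' + γ.length ≤ μ q := by
    intro q γ q' h
    induction h with
    | nil => simp
    | cons h _ ih => have := hμ _ _ _ _ h; simp only [List.length_cons]; omega
  intro q γ hγ h
  have := decrease h
  have := List.length_pos_iff.mpr hγ
  omega

end Acyclic

section Reachable

variable {P : FSM Q I O} {q₀ : Q}

def reachable (P : FSM Q I O) (q₀ : Q) : Set Q := {q | ∃ γ, P.Runs q₀ γ q}

def reachablePart (P : FSM Q I O) (q₀ : Q) : FSM (P.reachable q₀) I O :=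
  ⟨fun a i o b => P.h a i o b⟩

theorem mem_reachable_self : q₀ ∈ P.reachable q₀ := ⟨[], .nil q₀⟩

theorem mem_reachable_of_h {a b : Q} {i : I} {o : O} (ha : a ∈ P.reachable q₀)
    (h : P.h a i o b) : b ∈ P.reachable q₀ :=
  let ⟨γ, hγ⟩ := ha; ⟨γ ++ [(i, o)], hγ.snoc h⟩

theorem Runs.of_reachablePart {a b : P.reachable q₀} {γ : List (I × O)}
    (h : (P.reachablePart q₀).Runs a γ b) : P.Runs a γ b := by
  induction h with
  | nil => exact .nil _
  | cons h _ ih => exact .cons h ih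

theorem Runs.reachablePart {a b : Q} {γ : List (I × O)} (h : P.Runs a γ b)
    (ha : a ∈ P.reachable q₀) (hb : b ∈ P.reachable q₀) :
    (P.reachablePart q₀).Runs ⟨a, ha⟩ γ ⟨b, hb⟩ := by
  induction h with
  | nil => exact .nil _
  | cons h _ ih => exact .cons (show P.h _ _ _ _ from h) (ih (mem_reachable_of_h ha h) hb)

theorem isTestCase_reachablePart
    (hsi : ∀ q i₁ o₁ q₁ i₂ o₂ q₂, P.h q i₁ o₁ q₁ → P.h q i₂ o₂ q₂ → i₁ = i₂)
    (hoc : ∀ q i o q', P.h q i o q' → ∀ o', ∃ q'', P.h q i o' q'')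
    (hobs : P.Observable) (hac : ∀ q γ, γ ≠ ([] : List (I × O)) → ¬ P.Runs q γ q) :
    (P.reachablePart q₀).IsTestCase ⟨q₀, mem_reachable_self⟩ where
  singleInput q _ _ q₁ _ _ q₂ := hsi q _ _ q₁ _ _ q₂
  outputComplete q i o q' h o' :=
    let ⟨q'', h'⟩ := hoc q i o q' h o'
    ⟨⟨q'', mem_reachable_of_h q.2 h'⟩, h'⟩
  observable q _ _ t₁ t₂ h₁ h₂ := Subtype.ext (hobs q _ _ t₁ t₂ h₁ h₂)
  acyclic q γ hγ h := hac q γ hγ h.of_reachablePart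
  connected q := let ⟨γ, hγ⟩ := q.2; ⟨γ, hγ.reachablePart _ _⟩

theorem IsHomingFor.reachablePart {M : FSM S I O} {S' : Set S} (h : M.IsHomingFor S' P q₀) :
    M.IsHomingFor S' (P.reachablePart q₀) ⟨q₀, mem_reachable_self⟩ :=
  fun γ q hq hd => h γ q hq.of_reachablePart fun i o q' h' =>
    hd i o ⟨q', mem_reachable_of_h q.2 h'⟩ h'

end Reachable

section CompleteSubmachine

variable {M : FSM S I O} {s₁ s₂ : S}

theorem exists_runs_deadlock_of_inputClosed {P : FSM Q I O} {N : FSM T I O} {A : Set T}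
    (hoc : ∀ q i o q', P.h q i o q' → ∀ o', ∃ q'', P.h q i o' q'')
    (hwf : WellFounded P.Successor) (hA : N.InputClosed A) (q : Q) :
    ∀ x ∈ A, ∃ γ q' x', P.Runs q γ q' ∧ P.Deadlock q' ∧ N.Runs x γ x' ∧ x' ∈ A := by
  induction q using hwf.induction with
  | _ q ih =>
    intro x hx
    by_cases hq : P.Deadlock q
    · exact ⟨[], q, x, .nil q, hq, .nil x, hx⟩
    obtain ⟨i, o, q₁, h₁⟩ : ∃ i o q₁, P.h q i o q₁ := by simpa [Deadlock] using hq
    obtain ⟨o', x', hx', hx'A⟩ := hA x hx i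
    obtain ⟨q', hq'⟩ := hoc q i o q₁ h₁ o'
    obtain ⟨γ, q'', x'', hγ, hd, hxγ, hx''⟩ := ih q' ⟨i, o', hq'⟩ x' hx'A
    exact ⟨(i, o') :: γ, q'', x'', .cons hq' hγ, hd, .cons hx' hxγ, hx''⟩

theorem not_adaptivelyHomingPair_of_hasCompleteSubmachine (h : M.HasCompleteSubmachine s₁ s₂) :
    ¬ M.AdaptivelyHomingPair s₁ s₂ := by
  rintro ⟨Q, _, P, q₀, hP, hom⟩
  obtain ⟨A, hA₀, hdist, hA⟩ := h
  obtain ⟨γ, q, p, hq, hd, hp, hpA⟩ := exists_runs_deadlock_of_inputClosed hP.outputComplete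
    (wellFounded_successor_of_acyclic hP.acyclic) hA q₀ _ hA₀
  obtain ⟨s, hs⟩ := hom γ q hq hd
  have hp₁ : p.1 = s := hs s₁ (by simp) _ hp.inter.1
  have hp₂ : p.2 = s := hs s₂ (by simp) _ hp.inter.2
  exact hdist p hpA (hp₁.trans hp₂.symm)

end CompleteSubmachine

section Deletion

variable {N : FSM T I O} {A₀ : Set T}

theorem step_subset {A : Set T} : N.step A ⊆ A := fun _ hq => hq.1

theorem antitone_iterate_step : Antitone fun n => N.step^[n] A₀ :=
  antitone_nat_of_succ_le fun n => by
    rw [Function.iterate_succ_apply']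
    exact step_subset

theorem inputClosed_of_step_eq {A : Set T} (h : N.step A = A) : N.InputClosed A :=
  fun q hq => (h.symm ▸ hq : q ∈ N.step A).2

theorem exists_inputClosed_iterate_step [Finite T] : ∃ n, N.InputClosed (N.step^[n] A₀) := by
  obtain ⟨n, hn⟩ :=
    WellFoundedLT.antitone_chain_condition (antitone_iterate_step (N := N) (A₀ := A₀))
  refine ⟨n, inputClosed_of_step_eq ?_⟩
  rw [← Function.iterate_succ_apply' N.step, ← hn (n + 1) n.le_succ]

-- A state that is never deleted gets the junk round `sInf ∅ = 0`.
noncomputable def deletionRound (N : FSM T I O) (A₀ : Set T) (q : T) : ℕ :=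
  sInf {n | q ∉ N.step^[n] A₀}

theorem exists_input_deletionRound_lt {q : T} {K : ℕ} (hq : q ∈ A₀) (hqK : q ∉ N.step^[K] A₀) :
    ∃ i, ∀ o q', N.h q i o q' →
      q' ∉ N.step^[K] A₀ ∧ deletionRound N A₀ q' < deletionRound N A₀ q := by
  have hdel : q ∉ N.step^[deletionRound N A₀ q] A₀ :=
    Nat.sInf_mem (s := {n | q ∉ N.step^[n] A₀}) ⟨K, hqK⟩
  have hle : deletionRound N A₀ q ≤ K := Nat.sInf_le hqK
  obtain ⟨m, hm⟩ : ∃ m, deletionRound N A₀ q = m + 1 := by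
    refine Nat.exists_eq_succ_of_ne_zero fun h0 => ?_
    rw [h0] at hdel
    exact hdel hq
  have hmem : q ∈ N.step^[m] A₀ :=
    not_not.mp (Nat.notMem_of_lt_sInf (s := {n | q ∉ N.step^[n] A₀})
      (show m < deletionRound N A₀ q by omega))
  rw [hm, Function.iterate_succ_apply'] at hdel
  obtain ⟨i, hi⟩ : ∃ i, ∀ o q', N.h q i o q' → q' ∉ N.step^[m] A₀ := by
    simpa [step, hmem] using hdel
  refine ⟨i, fun o q' h => ⟨fun hK => hi o q' h (antitone_iterate_step (by omega) hK), ?_⟩⟩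
  rw [hm]
  exact Nat.lt_succ_of_le (Nat.sInf_le (hi o q' h))

end Deletion

section Strategy

/-- The state `some p` records the current pair of states of `M`; `none` is entered once no
distinct pair is left: the two runs have merged or one of them has stopped. -/
inductive StrategyStep (M : FSM S I O) (D : Set (S × S)) (σ : S × S → I) :
    Option (S × S) → I → O → Option (S × S) → Prop
  | next {p p' : S × S} {o : O} :
      p ∈ D → M.inter.h p (σ p) o p' → StrategyStep M D σ (some p) (σ p) o (some p')
  | homed {p : S × S} {o : O} :
      p ∈ D → (∀ p', ¬ M.inter.h p (σ p) o p') → StrategyStep M D σ (some p) (σ p) o none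

def strategyMachine (M : FSM S I O) (D : Set (S × S)) (σ : S × S → I) :
    FSM (Option (S × S)) I O :=
  ⟨StrategyStep M D σ⟩

variable {M : FSM S I O} {D : Set (S × S)} {σ : S × S → I}

theorem strategyMachine_singleInput :
    ∀ q i₁ o₁ q₁ i₂ o₂ q₂, (M.strategyMachine D σ).h q i₁ o₁ q₁ →
      (M.strategyMachine D σ).h q i₂ o₂ q₂ → i₁ = i₂ := by
  rintro _ _ _ _ _ _ _ (_ | _) h₂ <;> cases h₂ <;> rfl

theorem exists_strategyMachine_h_of_mem {p : S × S} (hp : p ∈ D) (o : O) :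
    ∃ q', (M.strategyMachine D σ).h (some p) (σ p) o q' := by
  by_cases h : ∃ p', M.inter.h p (σ p) o p'
  · obtain ⟨p', h⟩ := h
    exact ⟨some p', .next hp h⟩
  · exact ⟨none, .homed hp (not_exists.mp h)⟩

theorem strategyMachine_outputComplete :
    ∀ q i o q', (M.strategyMachine D σ).h q i o q' →
      ∀ o', ∃ q'', (M.strategyMachine D σ).h q i o' q'' := by
  rintro _ _ _ _ (⟨hp, _⟩ | ⟨hp, _⟩) o' <;> exact exists_strategyMachine_h_of_mem hp o'

theorem strategyMachine_observable (ho : M.Observable) : (M.strategyMachine D σ).Observable := by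
  rintro _ _ _ _ _ (⟨_, h₁⟩ | ⟨_, h₁⟩) (⟨_, h₂⟩ | ⟨_, h₂⟩)
  · rw [ho.inter _ _ _ _ _ h₁ h₂]
  · exact absurd h₁ (h₂ _)
  · exact absurd h₂ (h₁ _)
  · rfl

theorem strategyMachine_deadlock_none : (M.strategyMachine D σ).Deadlock none := by
  rintro _ _ _ ⟨⟩

theorem strategyMachine_rank_lt {r : S × S → ℕ}
    (hσ : ∀ p ∈ D, ∀ o p', M.inter.h p (σ p) o p' → p' ∈ D ∧ r p' < r p) :
    ∀ q i o q', (M.strategyMachine D σ).h q i o q' →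
      (q'.elim 0 (r · + 1)) < q.elim 0 (r · + 1) := by
  rintro _ _ _ _ (⟨hp, h⟩ | _)
  · simpa using (hσ _ hp _ _ h).2
  · simp

theorem eq_none_of_runs_strategyMachine [Nonempty O]
    (hσ : ∀ p ∈ D, ∀ o p', M.inter.h p (σ p) o p' → p' ∈ D) {p : S × S} {γ : List (I × O)}
    {q : Option (S × S)} (hp : p ∈ D) (h : (M.strategyMachine D σ).Runs (some p) γ q)
    (hq : (M.strategyMachine D σ).Deadlock q) : q = none := by
  generalize hs : some p = s at h
  induction h generalizing p with
  | nil =>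
    subst hs
    obtain ⟨q', hq'⟩ := exists_strategyMachine_h_of_mem hp (Classical.arbitrary O)
    exact absurd hq' (hq _ _ _)
  | cons hstep hrun ih =>
    subst hs
    cases hstep with
    | next _ h => exact ih (hσ _ hp _ _ h) hq rfl
    | homed => exact (hrun.of_deadlock strategyMachine_deadlock_none).2

theorem subsingleton_of_forall_not_inter (ho : M.Observable) {p : S × S} {i : I} {o : O}
    (h : ∀ p', ¬ M.inter.h p i o p') : {t | M.h p.1 i o t ∨ M.h p.2 i o t}.Subsingleton := by
  rintro t (h₁ | h₂) t' (h₁' | h₂')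
  · exact ho _ _ _ _ _ h₁ h₁'
  · exact not_not.mp fun hne => h (t, t') ⟨h₁, h₂', hne⟩
  · exact not_not.mp fun hne => h (t', t) ⟨h₁', h₂, Ne.symm hne⟩
  · exact ho _ _ _ _ _ h₂ h₂'

theorem subsingleton_of_runs_strategyMachine_none (ho : M.Observable) {p : S × S}
    {γ : List (I × O)} (h : (M.strategyMachine D σ).Runs (some p) γ none) :
    {t | M.Runs p.1 γ t ∨ M.Runs p.2 γ t}.Subsingleton := by
  generalize hs : some p = s at h
  generalize hn : (none : Option (S × S)) = n at h
  induction h generalizing p with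
  | nil => exact absurd (hs.trans hn.symm) (by simp)
  | cons hstep hrun ih =>
    subst hs hn
    cases hstep with
    | next _ hp' =>
      refine (ih rfl rfl).anti ?_
      rintro t (h | h)
      · cases h with | cons h hr => exact .inl (ho _ _ _ _ _ h hp'.1 ▸ hr)
      · cases h with | cons h hr => exact .inr (ho _ _ _ _ _ h hp'.2.1 ▸ hr)
    | homed _ hno =>
      obtain ⟨rfl, -⟩ := hrun.of_deadlock strategyMachine_deadlock_none
      refine (subsingleton_of_forall_not_inter ho hno).anti ?_
      rintro t (h | h)
      · cases h with | cons h hr => cases hr; exact .inl h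
      · cases h with | cons h hr => cases hr; exact .inr h

theorem strategyMachine_isHomingFor [Nonempty O] (ho : M.Observable)
    (hσ : ∀ p ∈ D, ∀ o p', M.inter.h p (σ p) o p' → p' ∈ D) {p₀ : S × S} (hp₀ : p₀ ∈ D) :
    M.IsHomingFor {p₀.1, p₀.2} (M.strategyMachine D σ) (some p₀) := by
  intro γ q hq hd
  obtain rfl := eq_none_of_runs_strategyMachine hσ hp₀ hq hd
  have hsub := subsingleton_of_runs_strategyMachine_none ho hq
  by_cases hne : ∃ t, M.Runs p₀.1 γ t ∨ M.Runs p₀.2 γ t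
  · obtain ⟨s, hs⟩ := hne
    refine ⟨s, ?_⟩
    rintro _ (rfl | rfl) t ht
    exacts [hsub (.inl ht) hs, hsub (.inr ht) hs]
  · refine ⟨p₀.1, ?_⟩
    rintro _ (rfl | rfl) t ht
    exacts [absurd ⟨t, .inl ht⟩ hne, absurd ⟨t, .inr ht⟩ hne]

theorem adaptivelyHomingSet_of_strategy [Finite S] [Nonempty O] (ho : M.Observable)
    {r : S × S → ℕ} (hσ : ∀ p ∈ D, ∀ o p', M.inter.h p (σ p) o p' → p' ∈ D ∧ r p' < r p)
    {p₀ : S × S} (hp₀ : p₀ ∈ D) : M.AdaptivelyHomingSet {p₀.1, p₀.2} :=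
  ⟨_, Fintype.ofFinite _, _, _,
    isTestCase_reachablePart strategyMachine_singleInput strategyMachine_outputComplete
      (strategyMachine_observable ho) (acyclic_of_rank _ (strategyMachine_rank_lt hσ)),
    (strategyMachine_isHomingFor ho (fun p hp o p' h => (hσ p hp o p' h).1) hp₀).reachablePart⟩

end Strategy

section Pair

variable [Finite S] {M : FSM S I O} {s₁ s₂ : S}

theorem exists_not_mem_iterate_step_of_not_hasCompleteSubmachine
    (h : ¬ M.HasCompleteSubmachine s₁ s₂) :
    ∃ K, (s₁, s₂) ∉ M.inter.step^[K] {p | p.1 ≠ p.2} := by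
  obtain ⟨K, hclosed⟩ :=
    exists_inputClosed_iterate_step (N := M.inter) (A₀ := {p : S × S | p.1 ≠ p.2})
  refine ⟨K, fun hmem => h ⟨_, hmem, fun p hp => ?_, hclosed⟩⟩
  exact antitone_iterate_step (Nat.zero_le K) hp

theorem adaptivelyHomingPair_of_not_hasCompleteSubmachine (hc : M.Complete) (ho : M.Observable)
    (hne : s₁ ≠ s₂) (h : ¬ M.HasCompleteSubmachine s₁ s₂) : M.AdaptivelyHomingPair s₁ s₂ := by
  set A₀ : Set (S × S) := {p | p.1 ≠ p.2}
  obtain ⟨K, hK⟩ := exists_not_mem_iterate_step_of_not_hasCompleteSubmachine h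
  obtain ⟨i, -⟩ := exists_input_deletionRound_lt (q := (s₁, s₂)) hne hK
  have : Nonempty I := ⟨i⟩
  have : Nonempty O := ⟨(hc s₁ i).choose⟩
  choose! σ hσ using fun p (hp : p ∈ A₀ \ M.inter.step^[K] A₀) =>
    exists_input_deletionRound_lt hp.1 hp.2
  exact adaptivelyHomingSet_of_strategy ho (D := A₀ \ M.inter.step^[K] A₀) (p₀ := (s₁, s₂))
    (fun p hp o p' h' => ⟨⟨h'.2.2, (hσ p hp o p' h').1⟩, (hσ p hp o p' h').2⟩) ⟨hne, hK⟩

end Pair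

end FSM

theorem pair_not_adaptively_homing_iff_hasCompleteSubmachine_general
    {S I O : Type} [Fintype S]
    (M : FSM S I O) (hc : M.Complete) (ho : M.Observable) (s₁ s₂ : S) (hne : s₁ ≠ s₂) :
    ¬ M.AdaptivelyHomingPair s₁ s₂ ↔ M.HasCompleteSubmachine s₁ s₂ :=
  ⟨fun h => by_contra fun hs =>
      h (FSM.adaptivelyHomingPair_of_not_hasCompleteSubmachine hc ho hne hs),
    FSM.not_adaptivelyHomingPair_of_hasCompleteSubmachine⟩

/-- the pair `(s₁, s₂)` is not adaptively homing iff the intersection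
`S/s₁ ∩ S/s₂` contains a complete submachine. -/
theorem pair_not_adaptively_homing_iff_hasCompleteSubmachine
    {S I O : Type} [Fintype S] [Fintype I] [Fintype O]
    (M : FSM S I O) (hc : M.Complete) (ho : M.Observable) (s₁ s₂ : S) (hne : s₁ ≠ s₂) :
    ¬ M.AdaptivelyHomingPair s₁ s₂ ↔ M.HasCompleteSubmachine s₁ s₂ :=
  pair_not_adaptively_homing_iff_hasCompleteSubmachine_general M hc ho s₁ s₂ hne
end

section
/- Let Q be the intersection FSM S/s1 ∩ S/s2 of a complete observable FSM S. Define the iterative deletion process: repeatedly remove from Q any state that has some input with no defined outgoing transition (to a remaining state), together with its incoming transitions. Then the initial state (s1,s2) is eventually removed by this process if and only if Q has no complete submachine. -/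
namespace FSM

variable {S I O : Type}

theorem step_subset_s2 (M : FSM S I O) (A : Set S) : M.step A ⊆ A := fun _ hq => hq.1

theorem InputClosed.subset_step {M : FSM S I O} {A B : Set S} (hA : M.InputClosed A)
    (hAB : A ⊆ B) : A ⊆ M.step B := fun q hq =>
  ⟨hAB hq, fun i => (hA q hq i).imp fun _ ⟨q', hq', hq'A⟩ => ⟨q', hq', hAB hq'A⟩⟩

theorem inputClosed_of_step_eq_s2 {M : FSM S I O} {A : Set S} (h : M.step A = A) :
    M.InputClosed A := fun q hq => (h.symm ▸ hq : q ∈ M.step A).2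

theorem interSurv_antitone (M : FSM S I O) : Antitone M.interSurv :=
  antitone_nat_of_succ_le fun n => M.inter.step_subset_s2 (M.interSurv n)

theorem InputClosed.subset_interSurv {M : FSM S I O} {A : Set (S × S)}
    (hA : M.inter.InputClosed A) (hdist : ∀ p ∈ A, p.1 ≠ p.2) : ∀ n, A ⊆ M.interSurv n
  | 0 => hdist
  | n + 1 => hA.subset_step (hA.subset_interSurv hdist n)

theorem exists_interSurv_succ_eq [Finite S] (M : FSM S I O) :
    ∃ N, M.interSurv (N + 1) = M.interSurv N := by
  obtain ⟨N, hN⟩ := WellFoundedLT.antitone_chain_condition M.interSurv_antitone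
  exact ⟨N, (hN (N + 1) N.le_succ).symm⟩

/- An input-closed set of distinct pairs survives every round; conversely the survivor sets
decrease in a finite lattice, so they stabilise, and a fixed point of `step` is input-closed. -/
theorem hasCompleteSubmachine_iff_forall_mem_interSurv [Finite S] (M : FSM S I O) (s₁ s₂ : S) :
    M.HasCompleteSubmachine s₁ s₂ ↔ ∀ n, (s₁, s₂) ∈ M.interSurv n := by
  constructor
  · rintro ⟨A, hinit, hdist, hA⟩ n
    exact hA.subset_interSurv hdist n hinit
  · intro hinit
    obtain ⟨N, hN⟩ := M.exists_interSurv_succ_eq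
    exact ⟨M.interSurv N, hinit N, M.interSurv_antitone (Nat.zero_le N),
      inputClosed_of_step_eq_s2 hN⟩

end FSM

theorem interSurv_removes_initial_iff_no_completeSubmachine_general
    {S I O : Type} [Fintype S]
    (M : FSM S I O) (s₁ s₂ : S) :
    (∃ n : ℕ, (s₁, s₂) ∉ M.interSurv n) ↔ ¬ M.HasCompleteSubmachine s₁ s₂ := by
  rw [M.hasCompleteSubmachine_iff_forall_mem_interSurv, not_forall]

/-- the initial state `(s₁, s₂)` is eventually removed by the iterative
deletion process on the intersection FSM iff the intersection has no complete submachine. -/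
theorem interSurv_removes_initial_iff_no_completeSubmachine
    {S I O : Type} [Fintype S] [Fintype I] [Fintype O]
    (M : FSM S I O) (hc : M.Complete) (ho : M.Observable) (s₁ s₂ : S) (hne : s₁ ≠ s₂) :
    (∃ n : ℕ, (s₁, s₂) ∉ M.interSurv n) ↔ ¬ M.HasCompleteSubmachine s₁ s₂ :=
  interSurv_removes_initial_iff_no_completeSubmachine_general M s₁ s₂
end

section
/- If the intersection FSM S/s1 ∩ S/s2 of a complete observable FSM S contains a complete submachine, then for every finite input sequence α there exists an output sequence β of the same length such that α/β is a trace of S/s1 ∩ S/s2 from the initial state (s1,s2); in particular, the (α/β)-successors of s1 and s2 in S exist and are distinct. -/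
namespace FSM

variable {S I O : Type}

theorem Runs.of_inter {M : FSM S I O} {p : S × S} {γ : List (I × O)} {p' : S × S}
    (h : M.inter.Runs p γ p') : M.Runs p.1 γ p'.1 ∧ M.Runs p.2 γ p'.2 := by
  induction h with
  | nil => exact ⟨.nil _, .nil _⟩
  | cons hstep _ ih => exact ⟨.cons hstep.1 ih.1, .cons hstep.2.1 ih.2⟩

theorem InputClosed.exists_runs_zip {M : FSM S I O} {A : Set S} (hA : M.InputClosed A)
    (α : List I) {q : S} (hq : q ∈ A) :
    ∃ β : List O, β.length = α.length ∧ ∃ q', M.Runs q (α.zip β) q' ∧ q' ∈ A := by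
  induction α generalizing q with
  | nil => exact ⟨[], rfl, q, .nil q, hq⟩
  | cons i α ih =>
    obtain ⟨o, r, hr, hrA⟩ := hA q hq i
    obtain ⟨β, hlen, q', hrun, hq'⟩ := ih hrA
    exact ⟨o :: β, by simp [hlen], q', .cons hr hrun, hq'⟩

end FSM

theorem completeSubmachine_gives_trace_for_every_input_sequence_general
    {S I O : Type}
    (M : FSM S I O) (s₁ s₂ : S)
    (hsub : M.HasCompleteSubmachine s₁ s₂) :
    ∀ α : List I, ∃ β : List O, β.length = α.length ∧
      ∃ p : S × S, M.inter.Runs (s₁, s₂) (α.zip β) p ∧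
        M.Runs s₁ (α.zip β) p.1 ∧ M.Runs s₂ (α.zip β) p.2 ∧ p.1 ≠ p.2 := by
  obtain ⟨A, hinit, hdistinct, hclosed⟩ := hsub
  intro α
  obtain ⟨β, hlen, p, hrun, hpA⟩ := hclosed.exists_runs_zip α hinit
  exact ⟨β, hlen, p, hrun, hrun.of_inter.1, hrun.of_inter.2, hdistinct p hpA⟩

/-- if the intersection `S/s₁ ∩ S/s₂` contains a complete submachine then for
every input sequence `α` there is an equally long output sequence `β` with `α/β` a trace of
the intersection from `(s₁, s₂)`; in particular the `α/β`-successors of `s₁` and `s₂` exist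
and are distinct. -/
theorem completeSubmachine_gives_trace_for_every_input_sequence
    {S I O : Type} [Fintype S] [Fintype I] [Fintype O]
    (M : FSM S I O) (hc : M.Complete) (ho : M.Observable) (s₁ s₂ : S)
    (hsub : M.HasCompleteSubmachine s₁ s₂) :
    ∀ α : List I, ∃ β : List O, β.length = α.length ∧
      ∃ p : S × S, M.inter.Runs (s₁, s₂) (α.zip β) p ∧
        M.Runs s₁ (α.zip β) p.1 ∧ M.Runs s₂ (α.zip β) p.2 ∧ p.1 ≠ p.2 :=
  completeSubmachine_gives_trace_for_every_input_sequence_general M s₁ s₂ hsub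
end
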